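/- Let X be a finite-dimensional real vector space, K ⊂ X a convex body with 0 in its interior, and L : X → X a linear map that, viewed as a linear vector field on X, is forward tangent to ∂K. Then tr L = 0 and e^{tL}(K) = K for all t ∈ ℝ, where e^{tL} denotes the exponential of the operator tL. -/

import Mathlib

/-!
Forward tangency of `x ↦ L x` to `∂K` gives Nagumo's subtangency condition both on `K` and on
`(interior K)ᶜ`, which by convexity has the same boundary; by Grönwall applied to the distance to
the set, both are forward invariant under the flow `exp (t • L)`. An invertible map preserving `K`
and `(interior K)ᶜ` maps `interior K` onto itself, hence `K = closure (interior K)` onto itself,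
and time reversal handles `t < 0`. Preserving the volume of `K`, `det (exp (t • L)) = ±1`, so it is
identically `1` near `t = 0` and its derivative `tr L` there vanishes.
-/

open Filter Topology Metric Set NormedSpace MeasureTheory

def IsForwardTangent {X : Type*} [NormedAddCommGroup X] [NormedSpace ℝ X]
    (B : Set X) (x v : X) : Prop :=
  ∃ (p : ℕ → X) (c : ℕ → ℝ), (∀ i, p i ∈ frontier B) ∧ (∀ i, 0 < c i) ∧
    Tendsto p atTop (𝓝 x) ∧ Tendsto (fun i => c i • (p i - x)) atTop (𝓝 v)

section Subtangent

variable {X : Type*} [NormedAddCommGroup X] [NormedSpace ℝ X]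

/-- Nagumo's subtangency condition: `liminf_{h → 0⁺} infDist (z + h • v) S / h = 0`. -/
def IsSubtangent (S : Set X) (z v : X) : Prop :=
  ∀ ε > 0, ∃ᶠ h in 𝓝[>] (0 : ℝ), infDist (z + h • v) S ≤ ε * h

lemma isSubtangent_of_mem_interior {S : Set X} {z : X} (hz : z ∈ interior S) (v : X) :
    IsSubtangent S z v := by
  intro ε hε
  have hcont : Tendsto (fun h : ℝ => z + h • v) (𝓝[>] 0) (𝓝 z) := by
    refine tendsto_nhdsWithin_of_tendsto_nhds ?_
    simpa using ((continuous_id.smul continuous_const).const_add z).tendsto (0 : ℝ)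
  have hmem : ∀ᶠ h in 𝓝[>] (0 : ℝ), z + h • v ∈ S :=
    hcont.eventually (mem_interior_iff_mem_nhds.1 hz)
  refine (hmem.and self_mem_nhdsWithin).frequently.mono fun h ⟨hS, hpos⟩ => ?_
  rw [infDist_zero_of_mem hS]
  exact mul_nonneg hε.le (le_of_lt hpos)

lemma isSubtangent_zero {S : Set X} {z : X} (hz : z ∈ S) : IsSubtangent S z 0 := by
  intro ε hε
  refine (eventually_mem_nhdsWithin (s := Ioi (0 : ℝ)) (a := 0)).frequently.mono fun h hpos => ?_
  rw [smul_zero, add_zero, infDist_zero_of_mem hz]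
  exact mul_nonneg hε.le (le_of_lt hpos)

lemma IsForwardTangent.isSubtangent {B S : Set X} {x v : X} (h : IsForwardTangent B x v)
    (hx : x ∈ S) (hBS : frontier B ⊆ S) : IsSubtangent S x v := by
  rcases eq_or_ne v 0 with rfl | hv
  · exact isSubtangent_zero hx
  obtain ⟨p, c, hpB, hc, hp, hcp⟩ := h
  intro ε hε
  have hnorm : Tendsto (fun i => ‖c i • (p i - x)‖) atTop (𝓝 ‖v‖) := hcp.norm
  -- `(c i)⁻¹ = ‖p i - x‖ / ‖c i • (p i - x)‖ → 0 / ‖v‖`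
  have hinv : Tendsto (fun i => (c i)⁻¹) atTop (𝓝[>] 0) := by
    refine tendsto_nhdsWithin_of_tendsto_nhds_of_eventually_within _ ?_
      (Eventually.of_forall fun i => inv_pos.2 (hc i))
    have hquot := (tendsto_iff_norm_sub_tendsto_zero.1 hp).div hnorm (norm_ne_zero_iff.2 hv)
    rw [zero_div] at hquot
    refine hquot.congr' ?_
    filter_upwards [hnorm.eventually_ne (norm_ne_zero_iff.2 hv)] with i hi
    rw [norm_smul, Real.norm_of_nonneg (hc i).le] at hi
    rw [Pi.div_apply, norm_smul, Real.norm_of_nonneg (hc i).le]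
    field_simp [right_ne_zero_of_mul hi]
  have hclose : ∀ᶠ i in atTop, ‖c i • (p i - x) - v‖ ≤ ε :=
    (tendsto_iff_norm_sub_tendsto_zero.1 hcp).eventually_le_const hε
  refine hinv.frequently (hclose.frequently.mono fun i hi => ?_)
  calc infDist (x + (c i)⁻¹ • v) S ≤ dist (x + (c i)⁻¹ • v) (p i) :=
        infDist_le_dist_of_mem (hBS (hpB i))
    _ = (c i)⁻¹ * ‖c i • (p i - x) - v‖ := by
        have : p i - (x + (c i)⁻¹ • v) = (c i)⁻¹ • (c i • (p i - x) - v) := by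
          rw [smul_sub, smul_smul, inv_mul_cancel₀ (hc i).ne', one_smul]
          abel
        rw [dist_comm, dist_eq_norm, this, norm_smul, Real.norm_of_nonneg (inv_pos.2 (hc i)).le]
    _ ≤ ε * (c i)⁻¹ := by
        rw [mul_comm]
        exact mul_le_mul_of_nonneg_right hi (inv_pos.2 (hc i)).le

lemma isSubtangent_of_frontier_eq {B S : Set X} (hS : IsClosed S) (hSB : frontier S = frontier B)
    {f : X → X} (hf : ∀ x ∈ frontier B, IsForwardTangent B x (f x)) {z : X} (hz : z ∈ S) :
    IsSubtangent S z (f z) := by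
  by_cases hzi : z ∈ interior S
  · exact isSubtangent_of_mem_interior hzi (f z)
  · have hzB : z ∈ frontier B := hSB ▸ hS.frontier_eq ▸ ⟨hz, hzi⟩
    exact (hf z hzB).isSubtangent hz (hSB ▸ hS.frontier_subset)

/-- Compare `φ (s + h) ≈ φ s + h • A (φ s)` with `z + h • A z` for a nearest point `z ∈ S`. -/
lemma frequently_slope_infDist_lt [ProperSpace X] {A : X →L[ℝ] X} {S : Set X} (hS : IsClosed S)
    (hsub : ∀ z ∈ S, IsSubtangent S z (A z)) (hSne : S.Nonempty) {φ : ℝ → X} {s r : ℝ}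
    (hφ : HasDerivAt φ (A (φ s)) s) (hr : ‖A‖ * infDist (φ s) S < r) :
    ∃ᶠ u in 𝓝[>] s, (u - s)⁻¹ * (infDist (φ u) S - infDist (φ s) S) < r := by
  obtain ⟨z, hzS, hz⟩ := hS.exists_infDist_eq_dist hSne (φ s)
  set d := infDist (φ s) S
  set ε := (r - ‖A‖ * d) / 2 with hε
  have hεpos : 0 < ε := by linarith
  have hshift : Tendsto (fun h => s + h) (𝓝[>] 0) (𝓝[>] s) := by
    have := (map_add_left_nhdsGT (c := s) (a := (0 : ℝ))).le
    rwa [add_zero] at this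
  have hlin : ∀ᶠ h in 𝓝[>] (0 : ℝ), ‖φ (s + h) - φ s - h • A (φ s)‖ ≤ ε / 2 * h := by
    filter_upwards [nhdsWithin_le_nhds ((hasDerivAt_iff_isLittleO_nhds_zero.1 hφ).def
      (half_pos hεpos)), self_mem_nhdsWithin] with h hh (hpos : 0 < h)
    rwa [Real.norm_of_nonneg hpos.le] at hh
  refine hshift.frequently (((hsub z hzS) (ε / 2) (half_pos hεpos)).and_eventually
    (hlin.and self_mem_nhdsWithin) |>.mono fun h ⟨hzh, hlin', (hpos : 0 < h)⟩ => ?_)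
  have hdz : ‖φ s - z‖ = d := by rw [← dist_eq_norm, hz]
  have hstep : dist (φ (s + h)) (z + h • A z) ≤ ε / 2 * h + (d + h * (‖A‖ * d)) :=
    calc dist (φ (s + h)) (z + h • A z)
        = ‖(φ (s + h) - φ s - h • A (φ s)) + ((φ s - z) + h • A (φ s - z))‖ := by
          rw [dist_eq_norm, map_sub, smul_sub]; congr 1; abel
      _ ≤ ‖φ (s + h) - φ s - h • A (φ s)‖ + (‖φ s - z‖ + h * (‖A‖ * ‖φ s - z‖)) := by
          refine (norm_add_le _ _).trans (add_le_add_right ((norm_add_le _ _).trans ?_) _)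
          rw [norm_smul, Real.norm_of_nonneg hpos.le]
          gcongr
          exact A.le_opNorm _
      _ ≤ ε / 2 * h + (d + h * (‖A‖ * d)) := by rw [hdz]; gcongr
  have hdist := (infDist_le_infDist_add_dist (s := S)).trans (add_le_add hzh hstep)
  rw [add_sub_cancel_left, inv_mul_lt_iff₀ hpos]
  nlinarith

lemma hasDerivAt_exp_smul_apply [CompleteSpace X] (A : X →L[ℝ] X) (x : X) (t : ℝ) :
    HasDerivAt (fun u : ℝ => exp (u • A) x) (A (exp (t • A) x)) t := by
  simpa using (hasDerivAt_exp_smul_const' A t).clm_apply (hasDerivAt_const t x)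

/-- Nagumo's theorem for linear flows. -/
theorem mapsTo_exp_smul_of_isSubtangent [ProperSpace X] {A : X →L[ℝ] X} {S : Set X}
    (hS : IsClosed S) (hsub : ∀ z ∈ S, IsSubtangent S z (A z)) {t : ℝ} (ht : 0 ≤ t) :
    MapsTo ⇑(exp (t • A)) S S := by
  intro x hx
  have hSne : S.Nonempty := ⟨x, hx⟩
  set f : ℝ → ℝ := fun u => infDist (exp (u • A) x) S
  have hf : Continuous f := (continuous_infDist_pt S).comp
    (continuous_iff_continuousAt.2 fun u => (hasDerivAt_exp_smul_apply A x u).continuousAt)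
  have hf0 : f 0 ≤ 0 := by simp [f, infDist_zero_of_mem hx]
  have hft := le_gronwallBound_of_liminf_deriv_right_le hf.continuousOn
    (fun s _ r hr => frequently_slope_infDist_lt hS hsub hSne (hasDerivAt_exp_smul_apply A x s) hr)
    hf0 (fun _ _ => (add_zero _).ge) t ⟨ht, le_rfl⟩
  rw [gronwallBound_ε0_δ0] at hft
  exact (hS.mem_iff_infDist_zero hSne).2 (le_antisymm hft infDist_nonneg)

end Subtangent

lemma image_eq_of_mapsTo_of_mapsTo_compl_interior {α : Type*} [TopologicalSpace α] [T2Space α]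
    {K : Set α} {E : α → α} (hK : IsCompact K) (hKi : closure (interior K) = K)
    (hE : Continuous E) (hEs : Function.Surjective E) (hKK : MapsTo E K K)
    (hcompl : MapsTo E (interior K)ᶜ (interior K)ᶜ) : E '' K = K := by
  refine hKK.image_subset.antisymm ?_
  have hU : interior K ⊆ E '' interior K := fun u hu => by
    obtain ⟨w, rfl⟩ := hEs u
    exact ⟨w, not_not.1 fun hw => hcompl hw hu, rfl⟩
  calc K = closure (interior K) := hKi.symm
    _ ⊆ closure (E '' K) := closure_mono (hU.trans (image_mono interior_subset))
    _ = E '' K := (hK.image hE).isClosed.closure_eq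

section Flow

variable {X : Type*} [NormedAddCommGroup X] [NormedSpace ℝ X]

lemma Convex.frontier_compl_interior {K : Set X} (hK : Convex ℝ K)
    (hKi : (interior K).Nonempty) : frontier (interior K)ᶜ = frontier K := by
  rw [frontier_compl, isOpen_interior.frontier_eq,
    hK.closure_interior_eq_closure_of_nonempty_interior hKi, frontier]

lemma exp_smul_apply_exp_neg_smul_apply [CompleteSpace X] (A : X →L[ℝ] X) (t : ℝ) (x : X) :
    exp (t • A) (exp ((-t) • A) x) = x := by
  have h : exp (t • A) * exp ((-t) • A) = 1 := by
    rw [← exp_add_of_commute_of_mem_ball (𝕂 := ℝ)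
      (((Commute.refl A).smul_left t).smul_right (-t)) (by simp [expSeries_radius_eq_top])
      (by simp [expSeries_radius_eq_top]), ← add_smul, add_neg_cancel, zero_smul, exp_zero]
  simpa using DFunLike.congr_fun h x

theorem image_exp_smul_eq_of_isForwardTangent [ProperSpace X] {K : Set X} (hK : IsCompact K)
    (hKconv : Convex ℝ K) (hKi : (interior K).Nonempty) {A : X →L[ℝ] X}
    (hA : ∀ x ∈ frontier K, IsForwardTangent K x (A x)) (t : ℝ) : ⇑(exp (t • A)) '' K = K := by
  have hforward : ∀ t : ℝ, 0 ≤ t → ⇑(exp (t • A)) '' K = K := fun t ht =>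
    image_eq_of_mapsTo_of_mapsTo_compl_interior hK
      (by rw [hKconv.closure_interior_eq_closure_of_nonempty_interior hKi, hK.isClosed.closure_eq])
      (exp (t • A)).continuous
      (Function.LeftInverse.surjective (exp_smul_apply_exp_neg_smul_apply A t))
      (mapsTo_exp_smul_of_isSubtangent hK.isClosed
        (fun z => isSubtangent_of_frontier_eq hK.isClosed rfl hA) ht)
      (mapsTo_exp_smul_of_isSubtangent isOpen_interior.isClosed_compl
        (fun z => isSubtangent_of_frontier_eq isOpen_interior.isClosed_compl
          (hKconv.frontier_compl_interior hKi) hA) ht)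
  rcases le_total 0 t with ht | ht
  · exact hforward t ht
  · conv_lhs => rw [← hforward (-t) (neg_nonneg.2 ht), image_image]
    simp only [exp_smul_apply_exp_neg_smul_apply, image_id']

end Flow

section Determinant

variable {𝕜 : Type*} [NontriviallyNormedField 𝕜]

lemma Matrix.hasDerivAt_det_of_eq_one {n : Type*} [Fintype n] [DecidableEq n]
    {M : 𝕜 → Matrix n n 𝕜} {A : Matrix n n 𝕜} {t₀ : 𝕜}
    (hM : ∀ i j, HasDerivAt (fun t => M t i j) (A i j) t₀) (h1 : M t₀ = 1) :
    HasDerivAt (fun t => (M t).det) A.trace t₀ := by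
  have hsum := HasDerivAt.fun_sum (u := Finset.univ) fun (σ : Equiv.Perm n) _ =>
    (HasDerivAt.fun_finsetProd (u := Finset.univ) fun j _ => hM (σ j) j).const_mul
      (Equiv.Perm.sign σ : 𝕜)
  simp only [← Matrix.det_apply'] at hsum
  refine hsum.congr_deriv ?_
  rw [Finset.sum_eq_single (1 : Equiv.Perm n) _ (by simp)]
  · simp [h1, Matrix.trace]
  · intro σ _ hσ
    -- a permutation `σ ≠ 1` moves two points `k ≠ σ k`, so every product below meets an
    -- off-diagonal entry of `M t₀ = 1`
    obtain ⟨k, hk⟩ : ∃ k, σ k ≠ k := not_forall.1 fun h => hσ (Equiv.ext h)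
    have hzero : ∀ j, ∏ i ∈ Finset.univ.erase j, M t₀ (σ i) i = 0 := by
      intro j
      obtain ⟨i, hij, hi⟩ : ∃ i, i ≠ j ∧ σ i ≠ i := by
        rcases ne_or_eq k j with hkj | rfl
        · exact ⟨k, hkj, hk⟩
        · exact ⟨σ k, hk, fun h => hk (σ.injective h)⟩
      exact Finset.prod_eq_zero (Finset.mem_erase.2 ⟨hij, Finset.mem_univ i⟩)
        (by rw [h1]; exact Matrix.one_apply_ne hi)
    simp [hzero]

variable [CompleteSpace 𝕜] {X : Type*} [NormedAddCommGroup X] [NormedSpace 𝕜 X]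
  [FiniteDimensional 𝕜 X]

lemma ContinuousLinearMap.hasDerivAt_det_of_eq_one {E : 𝕜 → X →L[𝕜] X} {A : X →L[𝕜] X}
    {t₀ : 𝕜} (hE : HasDerivAt E A t₀) (h1 : E t₀ = 1) :
    HasDerivAt (fun t => LinearMap.det (E t : X →ₗ[𝕜] X)) (LinearMap.trace 𝕜 X A) t₀ := by
  let b := Module.finBasis 𝕜 X
  simp_rw [← LinearMap.det_toMatrix b, LinearMap.trace_eq_matrix_trace 𝕜 b]
  refine Matrix.hasDerivAt_det_of_eq_one (fun i j => ?_) (by simp [h1])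
  let entry : (X →L[𝕜] X) →ₗ[𝕜] 𝕜 := (LinearMap.proj j) ∘ₗ (LinearMap.proj i) ∘ₗ
    (LinearMap.toMatrix b b).toLinearMap ∘ₗ ContinuousLinearMap.coeLM 𝕜
  exact LinearMap.toContinuousLinearMap entry |>.hasFDerivAt.comp_hasDerivAt t₀ hE

end Determinant

section Trace

variable {X : Type*} [NormedAddCommGroup X] [NormedSpace ℝ X] [FiniteDimensional ℝ X]

lemma LinearMap.abs_det_eq_one_of_image_eq {K : Set X} (hK : IsCompact K)
    (hKi : (interior K).Nonempty) {T : X →ₗ[ℝ] X} (hT : T '' K = K) :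
    |LinearMap.det T| = 1 := by
  borelize X
  let μ := (Module.finBasis ℝ X).addHaar
  have hμ0 : μ K ≠ 0 :=
    ((isOpen_interior.measure_pos μ hKi).trans_le (measure_mono interior_subset)).ne'
  have hμ := μ.addHaar_image_linearMap T K
  rw [hT] at hμ
  rw [← ENNReal.ofReal_eq_one]
  exact (ENNReal.mul_left_inj hμ0 hK.measure_lt_top.ne).1 (by rw [one_mul, ← hμ])

lemma trace_eq_zero_of_abs_det_exp_smul_eq_one {A : X →L[ℝ] X}
    (h : ∀ t : ℝ, |LinearMap.det ((exp (t • A) : X →L[ℝ] X) : X →ₗ[ℝ] X)| = 1) :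
    LinearMap.trace ℝ X A = 0 := by
  set D : ℝ → ℝ := fun t => LinearMap.det ((exp (t • A) : X →L[ℝ] X) : X →ₗ[ℝ] X)
  have hD : HasDerivAt D (LinearMap.trace ℝ X A) 0 :=
    ContinuousLinearMap.hasDerivAt_det_of_eq_one
      (by simpa using hasDerivAt_exp_smul_const' (𝕂 := ℝ) A 0) (by simp)
  have hD0 : D 0 = 1 := by simp [D]
  have hD1 : D =ᶠ[𝓝 0] fun _ => 1 := by
    filter_upwards [hD.continuousAt.eventually (lt_mem_nhds (hD0 ▸ one_pos))] with t ht
    exact (abs_of_pos ht).symm.trans (h t)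
  exact hD.unique ((hasDerivAt_const 0 1).congr_of_eventuallyEq hD1)

end Trace

theorem linear_forwardTangent_field
    {X : Type*} [NormedAddCommGroup X] [NormedSpace ℝ X] [FiniteDimensional ℝ X]
    (K : Set X) (hKcomp : IsCompact K) (hKconv : Convex ℝ K)
    (h0 : (0 : X) ∈ interior K)
    (L : X →ₗ[ℝ] X)
    (htang : ∀ x ∈ frontier K, IsForwardTangent K x (L x)) :
    LinearMap.trace ℝ X L = 0 ∧
      ∀ t : ℝ, (NormedSpace.exp (t • L.toContinuousLinearMap) : X →L[ℝ] X) '' K = K := by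
  have hKi : (interior K).Nonempty := ⟨0, h0⟩
  have hinv := image_exp_smul_eq_of_isForwardTangent hKcomp hKconv hKi
    (A := L.toContinuousLinearMap) htang
  exact ⟨trace_eq_zero_of_abs_det_exp_smul_eq_one fun t =>
    LinearMap.abs_det_eq_one_of_image_eq hKcomp hKi (hinv t), hinv⟩
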